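/- arXiv:2102.12526 — 2 statements merged into one kernel-verified Lean document; each statement's English description precedes it below -/
import Mathlib

section
/- Let A be a finite nonempty set, K, M positive integers, ψ : A → ℝ^K, and let ρ₁ ≥ ρ₂ ≥ … ≥ ρ_K > 0 with Λ = diag(ρ₁,…,ρ_K) and σ > 0. For a tuple P = (p₁,…,p_m) ∈ A^m let Ψ(P) ∈ ℝ^{m×K} be the matrix whose i-th row is ψ(p_i)ᵀ, let Γ(P) = Ψ(P) Λ Ψ(P)ᵀ + σ² I_m, and define the design objective g(P) = trace(Λ Ψ(P)ᵀ Γ(P)⁻¹ Ψ(P) Λ). Suppose the greedy sequence p̂₁, p̂₂, … is constructed so that at each step m, p̂_m maximizes p ↦ g(p̂₁,…,p̂_{m−1}, p) over p ∈ A. Let λ*_ψ = max_{p∈A} ‖ψ(p)‖² (equivalently, the maximum over p ∈ A of the largest eigenvalue of the rank-one matrix ψ(p)ψ(p)ᵀ). Then for every m with 1 ≤ m ≤ M, g(p̂₁,…,p̂_m) ≥ [1 − exp( −((1/ρ₁) / ((1/ρ_K) + (m/σ²) λ*_ψ)) · (m/M) )] · max_{P ∈ A^M} g(P). -/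
/-!
Write `Λ = diagonal ρ` and `c = σ⁻²`. By the Woodbury identity the objective is
`g(P) = tr Λ - tr M(P)⁻¹`, where `M(P) = Λ⁻¹ + c ∑ᵢ ψ(pᵢ) ψ(pᵢ)ᵀ` is the posterior precision.
Appending a direction `p` to `P` raises `g` by `c ‖M⁻¹ψ(p)‖² / (1 + c ψ(p)ᵀ M⁻¹ ψ(p))`
(Sherman–Morrison), while convexity of `X ↦ X⁻¹` bounds `g(Q) - g(P)` by the first-order term
`c ∑ᵢ ‖M(P)⁻¹ψ(qᵢ)‖²`. The posterior variance `ψ(p)ᵀ M⁻¹ ψ(p)` never exceeds `b = ρ₁ λ*_ψ`, so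
each greedy step closes at least the fraction `γ = 1 / (M (1 + c b))` of the gap to the optimal
`M`-point design. After `m` steps the gap is at most `(1 - γ)ᵐ ≤ exp (-γ m)` times the optimum,
and `γ` dominates the rate in the statement because `ρ_K ≤ ρ₁` and `m ≥ 1`.
-/

open Matrix

/-- The design objective `g(P) = trace(Λ Ψ(P)ᵀ (Ψ(P) Λ Ψ(P)ᵀ + σ² I)⁻¹ Ψ(P) Λ)` for a
tuple of sampling directions `P : Fin m → A`, where the `i`-th row of `Ψ(P)` is `ψ (P i)`. -/
noncomputable def designObj {A : Type*} (K : ℕ) (ψ : A → Fin K → ℝ) (ρ : Fin K → ℝ)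
    (σ : ℝ) (m : ℕ) (P : Fin m → A) : ℝ :=
  Matrix.trace
    (Matrix.diagonal ρ * (Matrix.of fun i k => ψ (P i) k)ᵀ *
      ((Matrix.of fun i k => ψ (P i) k) * Matrix.diagonal ρ *
          (Matrix.of fun i k => ψ (P i) k)ᵀ + σ ^ 2 • 1)⁻¹ *
      (Matrix.of fun i k => ψ (P i) k) * Matrix.diagonal ρ)

namespace Matrix

section CommRing

variable {n R : Type*} [Fintype n] [DecidableEq n] [CommRing R] {A D : Matrix n n R}

lemma inv_sub_inv_add_eq_mul_left (hA : IsUnit A) (hB : IsUnit (A + D)) :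
    A⁻¹ - (A + D)⁻¹ = A⁻¹ * D * (A + D)⁻¹ := by
  simpa only [nonsing_inv_eq_ringInverse, add_sub_cancel_left] using
    Ring.inverse_sub_inverse (iff_of_true hA hB)

lemma inv_sub_inv_add_eq_mul_right (hA : IsUnit A) (hB : IsUnit (A + D)) :
    A⁻¹ - (A + D)⁻¹ = (A + D)⁻¹ * D * A⁻¹ := by
  have h := Ring.inverse_sub_inverse (iff_of_true hB hA)
  rw [← nonsing_inv_eq_ringInverse, ← nonsing_inv_eq_ringInverse] at h
  rw [← neg_sub, h]
  noncomm_ring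

end CommRing

lemma transpose_of_mul_of {m n R : Type*} [Fintype m] [NonUnitalNonAssocSemiring R]
    (v : m → n → R) :
    (of v)ᵀ * of v = ∑ i, vecMulVec (v i) (v i) := by
  ext k l
  simp [mul_apply, vecMulVec_apply, Matrix.sum_apply]

section Real

variable {n : Type*} [Fintype n] {A D : Matrix n n ℝ}

lemma posSemidef_sum_vecMulVec_self {ι : Type*} (s : Finset ι) (v : ι → n → ℝ) :
    (∑ i ∈ s, vecMulVec (v i) (v i)).PosSemidef :=
  posSemidef_sum s fun i _ => posSemidef_vecMulVec_self_star (v i)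

lemma IsHermitian.vecMul_eq_mulVec (hA : A.IsHermitian) (w : n → ℝ) : w ᵥ* A = A *ᵥ w := by
  rw [← mulVec_transpose, ← conjTranspose_eq_transpose_of_trivial, hA.eq]

lemma IsHermitian.trace_mul_vecMulVec_mul (hA : A.IsHermitian) (w : n → ℝ) :
    trace (A * vecMulVec w w * A) = A *ᵥ w ⬝ᵥ A *ᵥ w := by
  rw [mul_vecMulVec, vecMulVec_mul, hA.vecMul_eq_mulVec, trace_vecMulVec]

variable [DecidableEq n]

lemma PosDef.inv_sub_inv_add_posSemidef (hA : A.PosDef) (hD : D.PosSemidef) :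
    (A⁻¹ - (A + D)⁻¹).PosSemidef := by
  have hB : (A + D).PosDef := hA.add_posSemidef hD
  have key : A⁻¹ - (A + D)⁻¹ =
      (A + D)⁻¹ᴴ * D * (A + D)⁻¹ + (D * (A + D)⁻¹)ᴴ * A⁻¹ * (D * (A + D)⁻¹) := by
    rw [conjTranspose_mul, hB.inv.isHermitian.eq, hD.isHermitian.eq,
      show (A + D)⁻¹ * D * A⁻¹ * (D * (A + D)⁻¹) = (A + D)⁻¹ * D * (A⁻¹ * D * (A + D)⁻¹) by
        simp only [Matrix.mul_assoc],
      ← inv_sub_inv_add_eq_mul_left hA.isUnit hB.isUnit, Matrix.mul_sub,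
      ← inv_sub_inv_add_eq_mul_right hA.isUnit hB.isUnit]
    abel
  rw [key]
  exact (hD.conjTranspose_mul_mul_same _).add (hA.inv.posSemidef.conjTranspose_mul_mul_same _)

lemma PosDef.trace_inv_add_le (hA : A.PosDef) (hD : D.PosSemidef) :
    trace (A + D)⁻¹ ≤ trace A⁻¹ := by
  simpa [trace_sub] using (hA.inv_sub_inv_add_posSemidef hD).trace_nonneg

lemma PosDef.trace_inv_sub_trace_inv_add_le (hA : A.PosDef) (hD : D.PosSemidef) :
    trace A⁻¹ - trace (A + D)⁻¹ ≤ trace (A⁻¹ * D * A⁻¹) := by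
  have hB : (A + D).PosDef := hA.add_posSemidef hD
  have key : A⁻¹ * D * A⁻¹ - (A⁻¹ - (A + D)⁻¹) = (D * A⁻¹)ᴴ * (A + D)⁻¹ * (D * A⁻¹) := by
    rw [conjTranspose_mul, hA.inv.isHermitian.eq, hD.isHermitian.eq,
      show A⁻¹ * D * (A + D)⁻¹ * (D * A⁻¹) = A⁻¹ * D * ((A + D)⁻¹ * D * A⁻¹) by
        simp only [Matrix.mul_assoc],
      ← inv_sub_inv_add_eq_mul_right hA.isUnit hB.isUnit, Matrix.mul_sub,
      ← inv_sub_inv_add_eq_mul_left hA.isUnit hB.isUnit]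
  have := (hB.inv.posSemidef.conjTranspose_mul_mul_same (D * A⁻¹)).trace_nonneg
  rw [← key, trace_sub, trace_sub] at this
  linarith

lemma PosDef.trace_inv_sub_trace_inv_add_smul_vecMulVec (hA : A.PosDef) {c : ℝ} (hc : 0 ≤ c)
    (w : n → ℝ) :
    trace A⁻¹ - trace (A + c • vecMulVec w w)⁻¹ =
      c * (A⁻¹ *ᵥ w ⬝ᵥ A⁻¹ *ᵥ w) / (1 + c * (w ⬝ᵥ A⁻¹ *ᵥ w)) := by
  set B := A + c • vecMulVec w w
  have hB : B.PosDef := hA.add_posSemidef ((posSemidef_vecMulVec_self_star w).smul hc)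
  set u := A⁻¹ *ᵥ w
  set q := w ⬝ᵥ u
  have hq : 0 < 1 + c * q := by
    have : 0 ≤ q := by simpa using hA.inv.posSemidef.dotProduct_mulVec_nonneg w
    positivity
  have hBu : B *ᵥ u = (1 + c * q) • w := by
    have hAu : A *ᵥ u = w := by
      rw [mulVec_mulVec, mul_nonsing_inv _ hA.det_pos.ne'.isUnit, one_mulVec]
    ext i
    simp [B, add_mulVec, smul_mulVec, hAu, vecMulVec_mulVec, q]
    ring
  have hBw : B⁻¹ *ᵥ w = (1 + c * q)⁻¹ • u := by
    rw [eq_inv_smul_iff₀ hq.ne', ← mulVec_smul, ← hBu, mulVec_mulVec,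
      nonsing_inv_mul _ hB.det_pos.ne'.isUnit, one_mulVec]
  rw [← trace_sub, inv_sub_inv_add_eq_mul_right hA.isUnit hB.isUnit, Matrix.mul_smul,
    Matrix.smul_mul, trace_smul, mul_vecMulVec, vecMulVec_mul,
    hA.inv.isHermitian.vecMul_eq_mulVec, trace_vecMulVec, hBw]
  simp only [smul_dotProduct, smul_eq_mul]
  field_simp
  rfl

end Real

end Matrix

lemma one_sub_exp_mul_le_of_gap_le {g : ℕ → ℝ} {G γ : ℝ} (hG : 0 ≤ G) (hγ : γ ≤ 1)
    (h₀ : g 0 = 0) (hstep : ∀ j, γ * (G - g j) ≤ g (j + 1) - g j) (m : ℕ) :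
    (1 - Real.exp (-(γ * m))) * G ≤ g m := by
  have hgap : ∀ j, G - g j ≤ (1 - γ) ^ j * G := by
    intro j
    induction j with
    | zero => simp [h₀]
    | succ j ih =>
      calc G - g (j + 1) ≤ (1 - γ) * (G - g j) := by linarith [hstep j]
        _ ≤ (1 - γ) * ((1 - γ) ^ j * G) := by gcongr
        _ = (1 - γ) ^ (j + 1) * G := by ring
  have hpow : (1 - γ) ^ m ≤ Real.exp (-(γ * m)) :=
    calc (1 - γ) ^ m ≤ Real.exp (-γ) ^ m :=
          pow_le_pow_left₀ (by linarith) (by linarith [Real.add_one_le_exp (-γ)]) m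
      _ = Real.exp (-(γ * m)) := by rw [← Real.exp_nat_mul]; ring_nf
  nlinarith [hgap m, mul_le_mul_of_nonneg_right hpow hG]

section Design

variable {α : Type*} {K : ℕ}

noncomputable def posteriorPrecision (ψ : α → Fin K → ℝ) (ρ : Fin K → ℝ) (σ : ℝ) {m : ℕ}
    (P : Fin m → α) : Matrix (Fin K) (Fin K) ℝ :=
  (diagonal ρ)⁻¹ + (σ ^ 2)⁻¹ • ∑ i, vecMulVec (ψ (P i)) (ψ (P i))

variable {ψ : α → Fin K → ℝ} {ρ : Fin K → ℝ} {σ : ℝ}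

lemma posteriorPrecision_posDef (hρ : ∀ k, 0 < ρ k) {m : ℕ} (P : Fin m → α) :
    (posteriorPrecision ψ ρ σ P).PosDef :=
  (posDef_diagonal_iff.mpr hρ).inv.add_posSemidef <|
    (posSemidef_sum_vecMulVec_self _ _).smul (by positivity)

lemma dotProduct_inv_posteriorPrecision_mulVec_nonneg (hρ : ∀ k, 0 < ρ k) {m : ℕ}
    (P : Fin m → α) (w : Fin K → ℝ) : 0 ≤ w ⬝ᵥ (posteriorPrecision ψ ρ σ P)⁻¹ *ᵥ w := by
  simpa using (posteriorPrecision_posDef hρ P).inv.posSemidef.dotProduct_mulVec_nonneg w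

lemma posteriorPrecision_snoc {m : ℕ} (P : Fin m → α) (p : α) :
    posteriorPrecision ψ ρ σ (Fin.snoc P p) =
      posteriorPrecision ψ ρ σ P + (σ ^ 2)⁻¹ • vecMulVec (ψ p) (ψ p) := by
  simp [posteriorPrecision, Fin.sum_univ_castSucc, smul_add, add_assoc]

lemma diagonal_sub_inv_posteriorPrecision_posSemidef (hρ : ∀ k, 0 < ρ k) {m : ℕ}
    (P : Fin m → α) : (diagonal ρ - (posteriorPrecision ψ ρ σ P)⁻¹).PosSemidef := by
  have hΛ : (diagonal ρ).PosDef := posDef_diagonal_iff.mpr hρ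
  simpa only [posteriorPrecision, nonsing_inv_nonsing_inv _ hΛ.det_pos.ne'.isUnit] using
    hΛ.inv.inv_sub_inv_add_posSemidef ((posSemidef_sum_vecMulVec_self _ _).smul (by positivity))

lemma dotProduct_inv_posteriorPrecision_mulVec_le (hρ : ∀ k, 0 < ρ k) {r : ℝ}
    (hr : ∀ k, ρ k ≤ r) {m : ℕ} (P : Fin m → α) (w : Fin K → ℝ) :
    w ⬝ᵥ (posteriorPrecision ψ ρ σ P)⁻¹ *ᵥ w ≤ r * (w ⬝ᵥ w) := by
  have h := (diagonal_sub_inv_posteriorPrecision_posSemidef (ψ := ψ) (σ := σ) hρ P)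
    |>.dotProduct_mulVec_nonneg w
  simp only [star_trivial, sub_mulVec, dotProduct_sub, sub_nonneg] at h
  refine h.trans ?_
  simp only [mulVec_diagonal, dotProduct, Finset.mul_sum]
  exact Finset.sum_le_sum fun k _ => by nlinarith [hr k, mul_self_nonneg (w k)]

lemma designObj_eq_trace_sub_trace_inv (hρ : ∀ k, 0 < ρ k) (hσ : σ ≠ 0) {m : ℕ}
    (P : Fin m → α) :
    designObj K ψ ρ σ m P = trace (diagonal ρ) - trace (posteriorPrecision ψ ρ σ P)⁻¹ := by
  set Ψ : Matrix (Fin m) (Fin K) ℝ := of fun i k => ψ (P i) k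
  have hΛ : (diagonal ρ).PosDef := posDef_diagonal_iff.mpr hρ
  have hC : ((σ ^ 2)⁻¹ • 1 : Matrix (Fin m) (Fin m) ℝ)⁻¹ = σ ^ 2 • 1 := by
    refine inv_eq_left_inv ?_
    rw [smul_mul_smul, Matrix.one_mul, mul_inv_cancel₀ (pow_ne_zero 2 hσ), one_smul]
  have hΓ : (σ ^ 2 • 1 + Ψ * diagonal ρ * Ψᵀ).PosDef := by
    refine (PosDef.one.smul (by positivity)).add_posSemidef ?_
    simpa [conjTranspose_eq_transpose_of_trivial] using
      hΛ.posSemidef.mul_mul_conjTranspose_same Ψ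
  have hW := add_mul_mul_inv_eq_sub _ Ψᵀ ((σ ^ 2)⁻¹ • 1) Ψ hΛ.inv.isUnit
    (PosDef.one.smul (by positivity)).isUnit
    (by rw [hC, nonsing_inv_nonsing_inv _ hΛ.det_pos.ne'.isUnit]; exact hΓ.isUnit)
  rw [hC, nonsing_inv_nonsing_inv _ hΛ.det_pos.ne'.isUnit, Matrix.mul_smul, Matrix.mul_one,
    Matrix.smul_mul, transpose_of_mul_of] at hW
  rw [designObj, posteriorPrecision, hW, ← trace_sub, sub_sub_cancel, add_comm]

lemma designObj_nonneg (hρ : ∀ k, 0 < ρ k) (hσ : σ ≠ 0) {m : ℕ} (P : Fin m → α) :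
    0 ≤ designObj K ψ ρ σ m P := by
  rw [designObj_eq_trace_sub_trace_inv hρ hσ, ← trace_sub]
  exact (diagonal_sub_inv_posteriorPrecision_posSemidef hρ P).trace_nonneg

lemma designObj_snoc_sub (hρ : ∀ k, 0 < ρ k) (hσ : σ ≠ 0) {m : ℕ} (P : Fin m → α) (p : α) :
    designObj K ψ ρ σ (m + 1) (Fin.snoc P p) - designObj K ψ ρ σ m P =
      (σ ^ 2)⁻¹ *
          ((posteriorPrecision ψ ρ σ P)⁻¹ *ᵥ ψ p ⬝ᵥ (posteriorPrecision ψ ρ σ P)⁻¹ *ᵥ ψ p) /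
        (1 + (σ ^ 2)⁻¹ * (ψ p ⬝ᵥ (posteriorPrecision ψ ρ σ P)⁻¹ *ᵥ ψ p)) := by
  rw [designObj_eq_trace_sub_trace_inv hρ hσ, designObj_eq_trace_sub_trace_inv hρ hσ,
    posteriorPrecision_snoc, ← (posteriorPrecision_posDef hρ P)
      |>.trace_inv_sub_trace_inv_add_smul_vecMulVec (by positivity)]
  ring

lemma designObj_sub_le_sum_dotProduct (hρ : ∀ k, 0 < ρ k) (hσ : σ ≠ 0) {m N : ℕ}
    (P : Fin m → α) (Q : Fin N → α) :
    designObj K ψ ρ σ N Q - designObj K ψ ρ σ m P ≤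
      (σ ^ 2)⁻¹ * ∑ i, (posteriorPrecision ψ ρ σ P)⁻¹ *ᵥ ψ (Q i) ⬝ᵥ
        (posteriorPrecision ψ ρ σ P)⁻¹ *ᵥ ψ (Q i) := by
  set c := (σ ^ 2)⁻¹
  have hMP := posteriorPrecision_posDef (ψ := ψ) (σ := σ) hρ P
  have hS : ∀ {l : ℕ} (R : Fin l → α), (c • ∑ i, vecMulVec (ψ (R i)) (ψ (R i))).PosSemidef :=
    fun R => (posSemidef_sum_vecMulVec_self _ _).smul (by positivity)
  have hswap : posteriorPrecision ψ ρ σ P + c • ∑ i, vecMulVec (ψ (Q i)) (ψ (Q i)) =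
      posteriorPrecision ψ ρ σ Q + c • ∑ i, vecMulVec (ψ (P i)) (ψ (P i)) := by
    simp only [posteriorPrecision]
    abel
  have hmono := (posteriorPrecision_posDef (ψ := ψ) (σ := σ) hρ Q).trace_inv_add_le (hS P)
  rw [← hswap] at hmono
  have hconv := hMP.trace_inv_sub_trace_inv_add_le (hS Q)
  rw [Matrix.mul_smul, Matrix.smul_mul, trace_smul, Finset.mul_sum, Finset.sum_mul,
    trace_sum] at hconv
  simp only [hMP.inv.isHermitian.trace_mul_vecMulVec_mul, smul_eq_mul] at hconv
  rw [designObj_eq_trace_sub_trace_inv hρ hσ, designObj_eq_trace_sub_trace_inv hρ hσ]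
  linarith

lemma mul_dotProduct_le_designObj_snoc_sub (hρ : ∀ k, 0 < ρ k) (hσ : σ ≠ 0) {m : ℕ}
    (P : Fin m → α) {p : α} {b : ℝ}
    (hb : ψ p ⬝ᵥ (posteriorPrecision ψ ρ σ P)⁻¹ *ᵥ ψ p ≤ b) :
    (σ ^ 2)⁻¹ *
        ((posteriorPrecision ψ ρ σ P)⁻¹ *ᵥ ψ p ⬝ᵥ (posteriorPrecision ψ ρ σ P)⁻¹ *ᵥ ψ p) ≤
      (1 + (σ ^ 2)⁻¹ * b) *
        (designObj K ψ ρ σ (m + 1) (Fin.snoc P p) - designObj K ψ ρ σ m P) := by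
  have hq := dotProduct_inv_posteriorPrecision_mulVec_nonneg (ψ := ψ) (σ := σ) hρ P (ψ p)
  have hu := dotProduct_self_star_nonneg ((posteriorPrecision ψ ρ σ P)⁻¹ *ᵥ ψ p)
  have hc : 0 ≤ (σ ^ 2)⁻¹ := by positivity
  rw [star_trivial] at hu
  rw [designObj_snoc_sub hρ hσ, mul_div_assoc', le_div_iff₀ (by positivity)]
  nlinarith [mul_le_mul_of_nonneg_left hb hc, mul_nonneg hc hu]

lemma designObj_sub_le_of_forall_le_snoc (hρ : ∀ k, 0 < ρ k) (hσ : σ ≠ 0) {m N : ℕ}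
    (P : Fin m → α) {b : ℝ} (hb : ∀ p, ψ p ⬝ᵥ (posteriorPrecision ψ ρ σ P)⁻¹ *ᵥ ψ p ≤ b)
    {p₀ : α} (hp₀ : ∀ p, designObj K ψ ρ σ (m + 1) (Fin.snoc P p) ≤
      designObj K ψ ρ σ (m + 1) (Fin.snoc P p₀))
    (Q : Fin N → α) :
    designObj K ψ ρ σ N Q - designObj K ψ ρ σ m P ≤
      N * (1 + (σ ^ 2)⁻¹ * b) *
        (designObj K ψ ρ σ (m + 1) (Fin.snoc P p₀) - designObj K ψ ρ σ m P) := by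
  refine (designObj_sub_le_sum_dotProduct hρ hσ P Q).trans ?_
  set Δ := designObj K ψ ρ σ (m + 1) (Fin.snoc P p₀) - designObj K ψ ρ σ m P
  rw [Finset.mul_sum, mul_assoc]
  calc _ ≤ Finset.univ.card • ((1 + (σ ^ 2)⁻¹ * b) * Δ) :=
        Finset.sum_le_card_nsmul _ _ _ fun i _ => ?_
    _ = _ := by rw [Finset.card_univ, Fintype.card_fin, nsmul_eq_mul]
  have hcb : 0 ≤ 1 + (σ ^ 2)⁻¹ * b := by
    have := (dotProduct_inv_posteriorPrecision_mulVec_nonneg hρ P (ψ (Q i))).trans (hb (Q i))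
    positivity
  exact (mul_dotProduct_le_designObj_snoc_sub hρ hσ P (hb (Q i))).trans
    (mul_le_mul_of_nonneg_left (sub_le_sub_right (hp₀ (Q i)) _) hcb)

theorem one_sub_exp_mul_le_designObj_greedy (hρ : ∀ k, 0 < ρ k) (hσ : σ ≠ 0) {b : ℝ}
    (hb : ∀ {j : ℕ} (P : Fin j → α) (p : α), ψ p ⬝ᵥ (posteriorPrecision ψ ρ σ P)⁻¹ *ᵥ ψ p ≤ b)
    (phat : ℕ → α)
    (hgreedy : ∀ (j : ℕ) (p : α),
      designObj K ψ ρ σ (j + 1) (Fin.snoc (fun i : Fin j => phat i) p) ≤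
        designObj K ψ ρ σ (j + 1) (Fin.snoc (fun i : Fin j => phat i) (phat j)))
    {N : ℕ} (hN : 0 < N) (Q : Fin N → α) (m : ℕ) :
    (1 - Real.exp (-(1 / (N * (1 + (σ ^ 2)⁻¹ * b)) * m))) * designObj K ψ ρ σ N Q ≤
      designObj K ψ ρ σ m fun i : Fin m => phat i := by
  have hprefix : ∀ j : ℕ, (Fin.snoc (fun i : Fin j => phat i) (phat j) : Fin (j + 1) → α) =
      fun i : Fin (j + 1) => phat i := fun j => by
    funext i
    cases i using Fin.lastCases <;> simp
  have hb₀ : 0 ≤ b := (dotProduct_inv_posteriorPrecision_mulVec_nonneg hρ (σ := σ)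
    (fun i : Fin 0 => phat i) (ψ (phat 0))).trans (hb _ _)
  have hD : 1 ≤ (N : ℝ) * (1 + (σ ^ 2)⁻¹ * b) :=
    one_le_mul_of_one_le_of_one_le (by exact_mod_cast hN) (le_add_of_nonneg_right (by positivity))
  refine one_sub_exp_mul_le_of_gap_le (g := fun j => designObj K ψ ρ σ j fun i : Fin j => phat i)
    (designObj_nonneg hρ hσ Q)
    ((div_le_one (by linarith)).mpr hD) (by simp [designObj]) (fun j => ?_) m
  rw [one_div, inv_mul_le_iff₀ (by linarith), ← hprefix]
  exact designObj_sub_le_of_forall_le_snoc hρ hσ _ (hb _) (hgreedy j) Q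

end Design

theorem greedy_design_selection_bound_general
    {A : Type*} [Fintype A] [Nonempty A]
    {K M : ℕ} (hK : 0 < K) (hM : 0 < M)
    (ψ : A → Fin K → ℝ) (ρ : Fin K → ℝ)
    (hρ_anti : Antitone ρ) (hρ_pos : ∀ k, 0 < ρ k)
    (σ : ℝ) (hσ : 0 < σ)
    (phat : ℕ → A)
    (hgreedy : ∀ (m : ℕ) (p : A),
      designObj K ψ ρ σ (m + 1) (Fin.snoc (fun i : Fin m => phat i) p) ≤
        designObj K ψ ρ σ (m + 1) (Fin.snoc (fun i : Fin m => phat i) (phat m)))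
    (lamψ : ℝ)
    (hlam : lamψ = Finset.univ.sup' Finset.univ_nonempty fun p : A => ∑ k, ψ p k ^ 2)
    (m : ℕ) (hm1 : 1 ≤ m) :
    (1 - Real.exp (-((1 / ρ ⟨0, hK⟩) /
            (1 / ρ ⟨K - 1, Nat.sub_lt hK one_pos⟩ + ((m : ℝ) / σ ^ 2) * lamψ)) *
          ((m : ℝ) / (M : ℝ)))) *
        (Finset.univ.sup' Finset.univ_nonempty fun Q : Fin M → A => designObj K ψ ρ σ M Q) ≤
      designObj K ψ ρ σ m fun i : Fin m => phat i := by
  set ρ₀ := ρ ⟨0, hK⟩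
  have hψ : ∀ p, ψ p ⬝ᵥ ψ p ≤ lamψ := fun p => by
    have := Finset.le_sup' (fun p : A => ∑ k, ψ p k ^ 2) (Finset.mem_univ p)
    rw [← hlam] at this
    simpa only [dotProduct, sq] using this
  have hlam₀ : 0 ≤ lamψ := (dotProduct_self_star_nonneg _).trans (hψ (Classical.arbitrary A))
  have hρ₀ : ∀ k, ρ k ≤ ρ₀ := fun k => hρ_anti (Fin.le_iff_val_le_val.mpr k.val.zero_le)
  have hρ₀_pos : 0 < ρ₀ := hρ_pos _
  obtain ⟨Q, -, hQ⟩ := Finset.exists_mem_eq_sup' Finset.univ_nonempty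
    fun Q : Fin M → A => designObj K ψ ρ σ M Q
  have hgreedy_bound := one_sub_exp_mul_le_designObj_greedy hρ_pos hσ.ne'
    (fun P p => (dotProduct_inv_posteriorPrecision_mulVec_le hρ_pos hρ₀ P (ψ p)).trans
      (mul_le_mul_of_nonneg_left (hψ p) hρ₀_pos.le)) phat hgreedy hM Q m
  have hrate : 1 / ρ₀ / (1 / ρ ⟨K - 1, Nat.sub_lt hK one_pos⟩ + (m / σ ^ 2) * lamψ) ≤
      1 / ρ₀ / (1 / ρ₀ + (σ ^ 2)⁻¹ * lamψ) := by
    have h₁ := one_div_le_one_div_of_le (hρ_pos ⟨K - 1, Nat.sub_lt hK one_pos⟩) (hρ₀ _)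
    have h₂ : (σ ^ 2)⁻¹ * lamψ ≤ (m / σ ^ 2) * lamψ := by
      rw [div_eq_mul_inv]
      gcongr
      exact le_mul_of_one_le_left (by positivity) (by exact_mod_cast hm1)
    exact div_le_div_of_nonneg_left (by positivity) (by positivity) (by linarith)
  have hγ : 1 / (M * (1 + (σ ^ 2)⁻¹ * (ρ₀ * lamψ))) * m =
      1 / ρ₀ / (1 / ρ₀ + (σ ^ 2)⁻¹ * lamψ) * (m / M) := by
    field_simp
  rw [hQ]
  refine le_trans (mul_le_mul_of_nonneg_right ?_ (designObj_nonneg hρ_pos hσ.ne' Q)) hgreedy_bound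
  gcongr
  rw [hγ, neg_mul, neg_le_neg_iff]
  gcongr

/-- Theorem 1: performance bound for the greedy q-space design selection algorithm. -/
theorem greedy_design_selection_bound
    {A : Type*} [Fintype A] [Nonempty A]
    {K M : ℕ} (hK : 0 < K) (hM : 0 < M)
    (ψ : A → Fin K → ℝ) (ρ : Fin K → ℝ)
    (hρ_anti : Antitone ρ) (hρ_pos : ∀ k, 0 < ρ k)
    (σ : ℝ) (hσ : 0 < σ)
    (phat : ℕ → A)
    (hgreedy : ∀ (m : ℕ) (p : A),
      designObj K ψ ρ σ (m + 1) (Fin.snoc (fun i : Fin m => phat i) p) ≤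
        designObj K ψ ρ σ (m + 1) (Fin.snoc (fun i : Fin m => phat i) (phat m)))
    (lamψ : ℝ)
    (hlam : lamψ = Finset.univ.sup' Finset.univ_nonempty fun p : A => ∑ k, ψ p k ^ 2)
    (m : ℕ) (hm1 : 1 ≤ m) (hmM : m ≤ M) :
    (1 - Real.exp (-((1 / ρ ⟨0, hK⟩) /
            (1 / ρ ⟨K - 1, Nat.sub_lt hK one_pos⟩ + ((m : ℝ) / σ ^ 2) * lamψ)) *
          ((m : ℝ) / (M : ℝ)))) *
        (Finset.univ.sup' Finset.univ_nonempty fun Q : Fin M → A => designObj K ψ ρ σ M Q) ≤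
      designObj K ψ ρ σ m fun i : Fin m => phat i :=
  greedy_design_selection_bound_general hK hM ψ ρ hρ_anti hρ_pos σ hσ phat hgreedy lamψ hlam m hm1
end

section
/- Let (Ω, μ) be a measure space and ψ₁,…,ψ_K : Ω → ℝ measurable functions that are orthonormal in L²(μ), i.e., ∫ ψ_j ψ_k dμ = δ_{jk}. Let Λ = diag(ρ₁,…,ρ_K) with ρ_k ≥ 0 and σ > 0. Let ξ be a random vector in ℝ^K with mean 0 and covariance matrix Λ, let ε be a random vector in ℝ^M with mean 0 and covariance σ² I_M, uncorrelated with ξ, and let s = m + Ψξ + ε for a fixed vector m ∈ ℝ^M and fixed matrix Ψ ∈ ℝ^{M×K}. Set Γ = ΨΛΨᵀ + σ² I_M and A* = ΛΨᵀΓ⁻¹. Define the random functions X(p) = μ₀(p) + Σ_{k=1}^K ξ_k ψ_k(p) and X̃(p) = μ₀(p) + Σ_{k=1}^K (A*(s − m))_k ψ_k(p), where μ₀ ∈ L²(μ) is a fixed function. Then the expected integrated squared error satisfies E[ ∫_Ω (X(p) − X̃(p))² dμ(p) ] = trace(Λ) − trace(ΛΨᵀΓ⁻¹ΨΛ). -/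
/-!
Write `Z = (ξ, ε)`, `A = ΛΨᵀΓ⁻¹` and `B = [I - AΨ, -A]`, so that the reconstruction error is
`X - X̃ = ∑ₖ (B Z)ₖ ψₖ`. Orthonormality of the `ψₖ` turns the integrated squared error into
`‖B Z‖²`, whose expectation is `trace (B C Bᵀ)` for the second-moment matrix `C = diag(Λ, σ²I)`
of `Z`. Finally `B C Bᵀ = (I - AΨ)Λ(I - AΨ)ᵀ + σ²AAᵀ = Λ - AΨΛ`, since `AΓ = ΛΨᵀ`.
-/

open Matrix MeasureTheory

section SecondMoment

variable {Ω ι : Type*} [MeasurableSpace Ω] {P : Measure Ω} [Fintype ι]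
  {Z : Ω → ι → ℝ} {C : Matrix ι ι ℝ}

lemma sq_dotProduct_eq_sum_sum (v z : ι → ℝ) :
    (v ⬝ᵥ z) ^ 2 = ∑ i, ∑ j, v i * v j * (z i * z j) := by
  rw [sq, dotProduct, Finset.sum_mul_sum]
  exact Finset.sum_congr rfl fun i _ => Finset.sum_congr rfl fun j _ => by ring

lemma integrable_sq_dotProduct (hint : ∀ i j, Integrable (fun ω => Z ω i * Z ω j) P)
    (v : ι → ℝ) : Integrable (fun ω => (v ⬝ᵥ Z ω) ^ 2) P := by
  simp_rw [sq_dotProduct_eq_sum_sum]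
  exact integrable_finsetSum _ fun i _ =>
    integrable_finsetSum _ fun j _ => (hint i j).const_mul _

lemma integral_sq_dotProduct (hint : ∀ i j, Integrable (fun ω => Z ω i * Z ω j) P)
    (hC : ∀ i j, ∫ ω, Z ω i * Z ω j ∂P = C i j) (v : ι → ℝ) :
    ∫ ω, (v ⬝ᵥ Z ω) ^ 2 ∂P = v ⬝ᵥ C *ᵥ v := by
  simp_rw [sq_dotProduct_eq_sum_sum]
  rw [integral_finsetSum _ fun i _ =>
    integrable_finsetSum _ fun j _ => (hint i j).const_mul _]
  simp_rw [integral_finsetSum _ fun j _ => (hint _ j).const_mul _, integral_const_mul, hC,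
    dotProduct, mulVec, dotProduct, Finset.mul_sum]
  exact Finset.sum_congr rfl fun i _ => Finset.sum_congr rfl fun j _ => by ring

lemma integral_dotProduct_mulVec_self
    (hint : ∀ i j, Integrable (fun ω => Z ω i * Z ω j) P)
    (hC : ∀ i j, ∫ ω, Z ω i * Z ω j ∂P = C i j) {κ : Type*} [Fintype κ] (B : Matrix κ ι ℝ) :
    ∫ ω, (B *ᵥ Z ω) ⬝ᵥ (B *ᵥ Z ω) ∂P = trace (B * C * Bᵀ) := by
  have hrow : ∀ ω, (B *ᵥ Z ω) ⬝ᵥ (B *ᵥ Z ω) = ∑ k, (B k ⬝ᵥ Z ω) ^ 2 := fun ω =>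
    Finset.sum_congr rfl fun k _ => (sq _).symm
  simp_rw [hrow]
  rw [integral_finsetSum _ fun k _ => integrable_sq_dotProduct hint (B k)]
  simp_rw [integral_sq_dotProduct hint hC, dotProduct_mulVec]
  rfl

end SecondMoment

lemma integral_sq_sum_mul_of_orthonormal {Ω ι : Type*} [MeasurableSpace Ω] {μ : Measure Ω}
    [Fintype ι] [DecidableEq ι] {ψ : ι → Ω → ℝ}
    (hint : ∀ j k, Integrable (fun p => ψ j p * ψ k p) μ)
    (hortho : ∀ j k, ∫ p, ψ j p * ψ k p ∂μ = if j = k then (1 : ℝ) else 0) (c : ι → ℝ) :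
    ∫ p, (∑ k, c k * ψ k p) ^ 2 ∂μ = c ⬝ᵥ c := by
  simpa [dotProduct] using integral_sq_dotProduct (Z := fun p k => ψ k p) (C := 1) hint
    (fun j k => (hortho j k).trans Matrix.one_apply.symm) c

section JointMoments

variable {Ω ι κ : Type*} [MeasurableSpace Ω] {P : Measure Ω} {ξ : Ω → ι → ℝ} {ε : Ω → κ → ℝ}

lemma integrable_sumElim_mul_sumElim (hξ : ∀ j k, Integrable (fun ω => ξ ω j * ξ ω k) P)
    (hε : ∀ i j, Integrable (fun ω => ε ω i * ε ω j) P)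
    (hξε : ∀ k i, Integrable (fun ω => ξ ω k * ε ω i) P) (a b : ι ⊕ κ) :
    Integrable (fun ω => Sum.elim (ξ ω) (ε ω) a * Sum.elim (ξ ω) (ε ω) b) P :=
  match a, b with
  | .inl j, .inl k => hξ j k
  | .inl k, .inr i => hξε k i
  | .inr i, .inl k => by
    simpa only [Sum.elim_inl, Sum.elim_inr, mul_comm] using hξε k i
  | .inr i, .inr j => hε i j

lemma integral_sumElim_mul_sumElim {C₁ : Matrix ι ι ℝ} {C₂ : Matrix κ κ ℝ}
    (hξ : ∀ j k, ∫ ω, ξ ω j * ξ ω k ∂P = C₁ j k) (hε : ∀ i j, ∫ ω, ε ω i * ε ω j ∂P = C₂ i j)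
    (hξε : ∀ k i, ∫ ω, ξ ω k * ε ω i ∂P = 0) (a b : ι ⊕ κ) :
    ∫ ω, Sum.elim (ξ ω) (ε ω) a * Sum.elim (ξ ω) (ε ω) b ∂P = fromBlocks C₁ 0 0 C₂ a b :=
  match a, b with
  | .inl j, .inl k => hξ j k
  | .inl k, .inr i => hξε k i
  | .inr i, .inl k => by
    simpa only [Sum.elim_inl, Sum.elim_inr, fromBlocks_apply₂₁, Matrix.zero_apply, mul_comm]
      using hξε k i
  | .inr i, .inr j => hε i j

end JointMoments

lemma fromCols_mul_fromBlocks_mul_transpose {R m n₁ n₂ : Type*} [CommRing R]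
    [Fintype n₁] [Fintype n₂] (D : Matrix m n₁ R) (E : Matrix m n₂ R)
    (C₁ : Matrix n₁ n₁ R) (C₂ : Matrix n₂ n₂ R) :
    fromCols D E * fromBlocks C₁ 0 0 C₂ * (fromCols D E)ᵀ = D * C₁ * Dᵀ + E * C₂ * Eᵀ := by
  simp only [fromCols_mul_fromBlocks, transpose_fromCols, fromCols_mul_fromRows, Matrix.mul_zero,
    add_zero, zero_add]

lemma one_sub_mul_mul_transpose_add_mul_mul_transpose {R m n : Type*} [CommRing R]
    [Fintype m] [Fintype n] [DecidableEq n] {Λ : Matrix n n R} {N : Matrix m m R}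
    {Ψ : Matrix m n R} {A : Matrix n m R} (hA : A * (Ψ * Λ * Ψᵀ + N) = Λ * Ψᵀ) :
    (1 - A * Ψ) * Λ * (1 - A * Ψ)ᵀ + A * N * Aᵀ = Λ - A * Ψ * Λ := by
  calc (1 - A * Ψ) * Λ * (1 - A * Ψ)ᵀ + A * N * Aᵀ
      = Λ - A * Ψ * Λ - (Λ * Ψᵀ - A * (Ψ * Λ * Ψᵀ + N)) * Aᵀ := by
        simp only [transpose_sub, transpose_one, transpose_mul, Matrix.sub_mul, Matrix.mul_sub,
          Matrix.mul_add, Matrix.add_mul, Matrix.one_mul, Matrix.mul_one, Matrix.mul_assoc]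
        abel
    _ = Λ - A * Ψ * Λ := by rw [hA, sub_self, Matrix.zero_mul, sub_zero]

lemma posDef_mul_mul_transpose_add_smul_one {m n : Type*} [Fintype m] [Fintype n]
    [DecidableEq m] {Λ : Matrix n n ℝ} (hΛ : Λ.PosSemidef) (Ψ : Matrix m n ℝ) {c : ℝ}
    (hc : 0 < c) : (Ψ * Λ * Ψᵀ + c • 1).PosDef := by
  simpa only [conjTranspose_eq_transpose_of_trivial] using
    PosDef.posSemidef_add (hΛ.mul_mul_conjTranspose_same Ψ) (PosDef.one.smul hc)

theorem expected_ISE_identity_general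
    {Ω : Type*} [MeasurableSpace Ω] (μ : Measure Ω)
    {Ω' : Type*} [MeasurableSpace Ω'] (P : Measure Ω')
    {K M : ℕ} (ψ : Fin K → Ω → ℝ)
    (hψint : ∀ j k, Integrable (fun p => ψ j p * ψ k p) μ)
    (hψortho : ∀ j k, ∫ p, ψ j p * ψ k p ∂μ = if j = k then (1 : ℝ) else 0)
    (ρ : Fin K → ℝ) (hρ : ∀ k, 0 ≤ ρ k) (σ : ℝ) (hσ : 0 < σ)
    (ξ : Ω' → Fin K → ℝ) (ε : Ω' → Fin M → ℝ)
    (hξint : ∀ j k, Integrable (fun ω => ξ ω j * ξ ω k) P)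
    (hεint : ∀ i j, Integrable (fun ω => ε ω i * ε ω j) P)
    (hξεint : ∀ k i, Integrable (fun ω => ξ ω k * ε ω i) P)
    (hξcov : ∀ j k, ∫ ω, ξ ω j * ξ ω k ∂P = Matrix.diagonal ρ j k)
    (hεcov : ∀ i j, ∫ ω, ε ω i * ε ω j ∂P = if i = j then σ ^ 2 else 0)
    (hξε : ∀ k i, ∫ ω, ξ ω k * ε ω i ∂P = 0)
    (mvec : Fin M → ℝ) (Ψ : Matrix (Fin M) (Fin K) ℝ) (μ₀ : Ω → ℝ) :
    (∫ ω, ∫ p,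
        ((μ₀ p + ∑ k, ξ ω k * ψ k p) -
          (μ₀ p + ∑ k,
            ((Matrix.diagonal ρ * Ψᵀ *
                (Ψ * Matrix.diagonal ρ * Ψᵀ + σ ^ 2 • 1)⁻¹).mulVec
              ((mvec + Ψ.mulVec (ξ ω) + ε ω) - mvec)) k * ψ k p)) ^ 2 ∂μ ∂P)
      = Matrix.trace (Matrix.diagonal ρ) -
        Matrix.trace (Matrix.diagonal ρ * Ψᵀ *
          (Ψ * Matrix.diagonal ρ * Ψᵀ + σ ^ 2 • 1)⁻¹ * Ψ * Matrix.diagonal ρ) := by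
  set Λ := diagonal ρ
  set Γ : Matrix (Fin M) (Fin M) ℝ := Ψ * Λ * Ψᵀ + σ ^ 2 • 1
  set A := Λ * Ψᵀ * Γ⁻¹
  set B := fromCols (1 - A * Ψ) (-A)
  have hΓ : Γ.PosDef :=
    posDef_mul_mul_transpose_add_smul_one (posSemidef_diagonal_iff.mpr hρ) Ψ (by positivity)
  have hAΓ : A * Γ = Λ * Ψᵀ :=
    nonsing_inv_mul_cancel_right Γ _ ((isUnit_iff_isUnit_det Γ).mp hΓ.isUnit)
  have herr : ∀ ω, ξ ω - A *ᵥ ((mvec + Ψ *ᵥ ξ ω + ε ω) - mvec) = B *ᵥ Sum.elim (ξ ω) (ε ω) := by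
    intro ω
    rw [fromCols_mulVec_sumElim, add_assoc, add_sub_cancel_left, mulVec_add, Matrix.sub_mulVec,
      Matrix.one_mulVec, Matrix.neg_mulVec, mulVec_mulVec]
    abel
  have hinner : ∀ ω, ∫ p, ((μ₀ p + ∑ k, ξ ω k * ψ k p) -
      (μ₀ p + ∑ k, (A *ᵥ ((mvec + Ψ *ᵥ ξ ω + ε ω) - mvec)) k * ψ k p)) ^ 2 ∂μ
      = (B *ᵥ Sum.elim (ξ ω) (ε ω)) ⬝ᵥ (B *ᵥ Sum.elim (ξ ω) (ε ω)) := by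
    intro ω
    simp_rw [← herr, ← integral_sq_sum_mul_of_orthonormal hψint hψortho, Pi.sub_apply, sub_mul,
      Finset.sum_sub_distrib, add_sub_add_left_eq_sub]
  have hεcov_matrix :
      ∀ i j, ∫ ω, ε ω i * ε ω j ∂P = (σ ^ 2 • 1 : Matrix (Fin M) (Fin M) ℝ) i j := by
    simp [hεcov, Matrix.one_apply]
  simp_rw [hinner]
  rw [integral_dotProduct_mulVec_self (integrable_sumElim_mul_sumElim hξint hεint hξεint)
    (integral_sumElim_mul_sumElim hξcov hεcov_matrix hξε), fromCols_mul_fromBlocks_mul_transpose,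
    Matrix.neg_mul, Matrix.neg_mul, transpose_neg, Matrix.mul_neg, neg_neg,
    one_sub_mul_mul_transpose_add_mul_mul_transpose hAΓ, trace_sub]

/-- The expected integrated squared error of the best-linear (conditional-mean style)
reconstruction `X̃` of the rank-`K` random signal `X` from noisy samples `s = m + Ψξ + ε`
equals `trace(Λ) − trace(ΛΨᵀΓ⁻¹ΨΛ)`, where `Γ = ΨΛΨᵀ + σ²I`. -/
theorem expected_ISE_identity
    {Ω : Type*} [MeasurableSpace Ω] (μ : Measure Ω)
    {Ω' : Type*} [MeasurableSpace Ω'] (P : Measure Ω') [IsProbabilityMeasure P]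
    {K M : ℕ} (ψ : Fin K → Ω → ℝ)
    (hψmeas : ∀ k, Measurable (ψ k))
    (hψint : ∀ j k, Integrable (fun p => ψ j p * ψ k p) μ)
    (hψortho : ∀ j k, ∫ p, ψ j p * ψ k p ∂μ = if j = k then (1 : ℝ) else 0)
    (ρ : Fin K → ℝ) (hρ : ∀ k, 0 ≤ ρ k) (σ : ℝ) (hσ : 0 < σ)
    (ξ : Ω' → Fin K → ℝ) (ε : Ω' → Fin M → ℝ)
    (hξmeas : ∀ k, Measurable fun ω => ξ ω k)
    (hεmeas : ∀ i, Measurable fun ω => ε ω i)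
    (hξint1 : ∀ k, Integrable (fun ω => ξ ω k) P)
    (hεint1 : ∀ i, Integrable (fun ω => ε ω i) P)
    (hξint : ∀ j k, Integrable (fun ω => ξ ω j * ξ ω k) P)
    (hεint : ∀ i j, Integrable (fun ω => ε ω i * ε ω j) P)
    (hξεint : ∀ k i, Integrable (fun ω => ξ ω k * ε ω i) P)
    (hξmean : ∀ k, ∫ ω, ξ ω k ∂P = 0)
    (hεmean : ∀ i, ∫ ω, ε ω i ∂P = 0)
    (hξcov : ∀ j k, ∫ ω, ξ ω j * ξ ω k ∂P = Matrix.diagonal ρ j k)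
    (hεcov : ∀ i j, ∫ ω, ε ω i * ε ω j ∂P = if i = j then σ ^ 2 else 0)
    (hξε : ∀ k i, ∫ ω, ξ ω k * ε ω i ∂P = 0)
    (mvec : Fin M → ℝ) (Ψ : Matrix (Fin M) (Fin K) ℝ) (μ₀ : Ω → ℝ) :
    (∫ ω, ∫ p,
        ((μ₀ p + ∑ k, ξ ω k * ψ k p) -
          (μ₀ p + ∑ k,
            ((Matrix.diagonal ρ * Ψᵀ *
                (Ψ * Matrix.diagonal ρ * Ψᵀ + σ ^ 2 • 1)⁻¹).mulVec
              ((mvec + Ψ.mulVec (ξ ω) + ε ω) - mvec)) k * ψ k p)) ^ 2 ∂μ ∂P)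
      = Matrix.trace (Matrix.diagonal ρ) -
        Matrix.trace (Matrix.diagonal ρ * Ψᵀ *
          (Ψ * Matrix.diagonal ρ * Ψᵀ + σ ^ 2 • 1)⁻¹ * Ψ * Matrix.diagonal ρ) :=
  expected_ISE_identity_general μ P ψ hψint hψortho ρ hρ σ hσ ξ ε hξint hεint hξεint hξcov hεcov hξε
    mvec Ψ μ₀
end
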